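/- For p ∈ (0,1), A > 0, k > 0, μ_x > 0 with p = kμ_t/μ_x, the time and space sections of the discrete transport solution, scaled by μ_t and μ_x respectively, are all probability mass functions (nonnegative, summing to 1) if and only if k = 1, μ_t < μ_x, and A = 1/μ_x. -/
import Mathlib

lemma spaceSum (A p : ℝ) (n : ℕ) :
    ∑' m : ℕ, (if m ≤ n then A * (n.choose m : ℝ) * (1 - p) ^ (n - m) * p ^ m else 0)
      = A * (p + (1 - p)) ^ n := by
  rw [tsum_eq_sum (s := Finset.range (n + 1))
    (by intro m hm; simp only [Finset.mem_range] at hm; rw [if_neg]; omega)]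
  rw [add_pow, Finset.mul_sum]
  apply Finset.sum_congr rfl
  intro m hm
  simp only [Finset.mem_range] at hm
  rw [if_pos (by omega)]
  ring

lemma timeSum (A p : ℝ) (hp0 : 0 < p) (hp1 : p < 1) (m : ℕ) :
    ∑' n : ℕ, (if m ≤ n then A * (n.choose m : ℝ) * (1 - p) ^ (n - m) * p ^ m else 0)
      = A / p := by
  have hr : ‖1 - p‖ < 1 := by rw [Real.norm_eq_abs]; rw [abs_lt]; constructor <;> linarith
  have h1 := (hasSum_choose_mul_geometric_of_norm_lt_one (𝕜 := ℝ) m hr).mul_left (A * p ^ m)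
  have h2 : HasSum (fun n : ℕ =>
      (if m ≤ n + m then A * ((n + m).choose m : ℝ) * (1 - p) ^ (n + m - m) * p ^ m else 0))
      (A * p ^ m * (1 / (1 - (1 - p)) ^ (m + 1))) := by
    refine h1.congr_fun fun n => ?_
    rw [if_pos (by omega)]
    simp only [Nat.add_sub_cancel]
    ring
  rw [hasSum_nat_add_iff (f := fun n : ℕ =>
      (if m ≤ n then A * ((n).choose m : ℝ) * (1 - p) ^ (n - m) * p ^ m else 0)) m] at h2
  have hz : (∑ i ∈ Finset.range m,
      (if m ≤ i then A * ((i).choose m : ℝ) * (1 - p) ^ (i - m) * p ^ m else 0)) = 0 := by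
    apply Finset.sum_eq_zero
    intro i hi
    simp only [Finset.mem_range] at hi
    rw [if_neg (by omega)]
  rw [hz, add_zero] at h2
  rw [h2.tsum_eq]
  have : 1 - (1 - p) = p := by ring
  rw [this]
  field_simp
  rw [pow_succ]
  ring

/-- The scaled space and time sections of the discrete transport solution are all
probability mass functions iff `k = 1`, `μ_t < μ_x` and `A = 1/μ_x`. -/
theorem stmt10 (A k μt μx : ℝ) (hA : 0 < A) (hk : 0 < k) (hμt : 0 < μt) (hμx : 0 < μx)
    (hp0 : 0 < k * μt / μx) (hp1 : k * μt / μx < 1)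
    (u : ℕ → ℕ → ℝ)
    (hu : ∀ m n : ℕ,
      u m n = if m ≤ n then
        A * (Nat.choose n m : ℝ) * (1 - k * μt / μx) ^ (n - m) * (k * μt / μx) ^ m
      else 0) :
    ((∀ m n : ℕ, 0 ≤ u m n)
      ∧ (∀ n : ℕ, μx * ∑' m : ℕ, u m n = 1)
      ∧ (∀ m : ℕ, μt * ∑' n : ℕ, u m n = 1))
    ↔ (k = 1 ∧ μt < μx ∧ A = 1 / μx) := by
  set p := k * μt / μx with hp
  have hSs : ∀ n : ℕ, ∑' m : ℕ, u m n = A := by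
    intro n
    have := spaceSum A p n
    simp only [← hu] at this
    rw [this]; ring_nf
  have hSt : ∀ m : ℕ, ∑' n : ℕ, u m n = A / p := by
    intro m
    have := timeSum A p hp0 hp1 m
    simp only [← hu] at this
    exact this
  constructor
  · rintro ⟨-, h2, h3⟩
    have hA1 : μx * A = 1 := by rw [← hSs 0]; exact h2 0
    have hA2 : μt * (A / p) = 1 := by rw [← hSt 0]; exact h3 0
    have hAeq : A = 1 / μx := by field_simp at hA1 ⊢; linarith
    have hk1 : k = 1 := by
      rw [hp] at hA2
      field_simp at hA2
      have hxne : μx ≠ 0 := ne_of_gt hμx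
      have := hA1
      nlinarith
    refine ⟨hk1, ?_, hAeq⟩
    rw [hp, hk1, one_mul] at hp1
    calc μt = μt / μx * μx := by field_simp
    _ < 1 * μx := by apply mul_lt_mul_of_pos_right hp1 hμx
    _ = μx := by ring
  · rintro ⟨hk1, hlt, hAeq⟩
    refine ⟨?_, ?_, ?_⟩
    · intro m n
      rw [hu]
      split
      · have h1 : (0:ℝ) ≤ 1 - p := by linarith
        positivity
      · exact le_refl 0
    · intro n; rw [hSs n, hAeq]; field_simp
    · intro m
      rw [hSt m, hAeq, hp, hk1]
      field_simp
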